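/- arXiv:2603.10406 — 3 statements merged into one kernel-verified Lean document; each statement's English description precedes it below -/
import Mathlib

section
/- Let n ≥ 6 be an integer. Then μ₂(𝔏(Q'_n)) ≤ 2 − 2cos(2π/(n−3)), where μ₂ denotes the second-smallest eigenvalue. -/
open Matrix

/-- The ascending sorted list of eigenvalues (with multiplicity) of a real
symmetric (Hermitian) matrix; junk value `[]` otherwise. -/
noncomputable def eigsList {m : Type*} [Fintype m] [DecidableEq m]
    (M : Matrix m m ℝ) : List ℝ :=
  if h : M.IsHermitian then Multiset.sort (Finset.univ.val.map h.eigenvalues) (· ≤ ·)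
  else []

/-- The `k`-th largest eigenvalue (1-indexed, counted with multiplicity). -/
noncomputable def kthLargest {m : Type*} [Fintype m] [DecidableEq m]
    (M : Matrix m m ℝ) (k : ℕ) : ℝ :=
  (eigsList M).getD (Fintype.card m - k) 0

/-- The `k`-th smallest eigenvalue (1-indexed, counted with multiplicity). -/
noncomputable def kthSmallest {m : Type*} [Fintype m] [DecidableEq m]
    (M : Matrix m m ℝ) (k : ℕ) : ℝ :=
  (eigsList M).getD (k - 1) 0

/-- The Laplacian `𝔏(M) = diag(M·1) − M`. -/
noncomputable def Lap {n : ℕ} (M : Matrix (Fin n) (Fin n) ℝ) : Matrix (Fin n) (Fin n) ℝ :=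
  Matrix.diagonal (fun i => ∑ j, M i j) - M

/-- The matrix `Q_n` (1-indexed description, realized on `Fin n`). -/
noncomputable def Qmat (n : ℕ) : Matrix (Fin n) (Fin n) ℝ := fun i j =>
  let d := ((i.val : ℤ) - (j.val : ℤ)).natAbs
  if d = 0 then
    (if i.val = 0 ∨ i.val = n - 1 then ((n : ℝ) ^ 2 - n - 6) / 2
     else if i.val = 1 ∨ i.val = n - 2 then ((n : ℝ) ^ 2 - 3 * n - 2) / 2
     else ((n : ℝ) ^ 2 - 3 * n - 6) / 2)
  else if d = 1 then (n : ℝ) - 2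
  else if d = 2 then 2
  else 0

/-- The matrix `Q'_n` (1-indexed description, realized on `Fin n`). -/
noncomputable def Qp (n : ℕ) : Matrix (Fin n) (Fin n) ℝ := fun i j =>
  let a := i.val + 1
  let b := j.val + 1
  if (a = 1 ∧ b = 2) ∨ (a = 2 ∧ b = 1) then (n : ℝ) - 2
  else if (a = 1 ∧ b = 3) ∨ (a = 3 ∧ b = 1) then 2
  else if a = 2 ∧ b = 2 then 1
  else if (a = 2 ∧ b = 3) ∨ (a = 3 ∧ b = 2) then 1
  else if a = 3 ∧ b = 3 then (n : ℝ) - 4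
  else if (3 ≤ a ∧ a ≤ n - 1 ∧ b = a + 1) ∨ (3 ≤ b ∧ b ≤ n - 1 ∧ a = b + 1) then 1
  else if a = b ∧ 4 ≤ a ∧ a ≤ n - 1 then (n : ℝ) - 2
  else if a = n ∧ b = n then (n : ℝ) - 1
  else 0


/-!
By Courant–Fischer, `μ₂` is at most the largest Rayleigh quotient of `𝔏(Q'_n)` on any plane.
Take the plane spanned by `1` and the vector `x` that vanishes on the triangle `{1, 2, 3}` and
equals `sin ((k - 3) θ)` on vertex `k` of the path `3 – 4 – ⋯ – n`, where `θ = 2π / (n - 3)`.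
The sine values sum to zero, so `x ⊥ 1`; and on every vertex where `x` does not vanish,
`𝔏(Q'_n)` acts on `x` as the path Laplacian, for which the discrete sine is an eigenvector with
eigenvalue `2 - 2 cos θ`. Hence `x ⬝ 𝔏 x = (2 - 2 cos θ) ‖x‖²`, and since `𝔏 1 = 0` the same
bound holds on the whole plane.
-/

open Real

lemma List.getD_le_of_lt_countP {α : Type*} [LinearOrder α] {l : List α}
    (hl : l.Pairwise (· ≤ ·)) {c : α} {k : ℕ} (hk : k < l.countP (· ≤ c)) (d : α) :
    l.getD k d ≤ c := by
  induction l generalizing k with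
  | nil => simp at hk
  | cons a t ih =>
    rw [List.pairwise_cons] at hl
    cases k with
    | zero =>
      by_contra! hca
      have : (a :: t).countP (· ≤ c) = 0 := by
        rw [List.countP_eq_zero]
        intro b hb
        rcases List.mem_cons.mp hb with rfl | hb
        · simpa using hca
        · simpa using hca.trans_le (hl.1 b hb)
      omega
    | succ k =>
      rw [List.countP_cons] at hk
      simpa using ih hl.2 (by split at hk <;> omega)

lemma sum_fin_ite_val_eq {M : Type*} [AddCommMonoid M] {n a : ℕ} (ha : a < n) (f : ℕ → M) :
    ∑ j : Fin n, (if j.val = a then f j else 0) = f a := by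
  rw [Fin.sum_univ_eq_sum_range (fun q => if q = a then f q else 0), Finset.sum_ite_eq',
    if_pos (Finset.mem_range.mpr ha)]

lemma finrank_span_pair_of_dotProduct_eq_zero {m : Type*} [Fintype m] {u x : m → ℝ}
    (hu : u ≠ 0) (hx : x ≠ 0) (hux : u ⬝ᵥ x = 0) :
    Module.finrank ℝ (Submodule.span ℝ {u, x}) = 2 := by
  have hind : LinearIndependent ℝ ![u, x] := by
    refine (LinearIndependent.pair_iff' hu).mpr fun a hax => hx (dotProduct_self_eq_zero.mp ?_)
    nth_rewrite 1 [← hax]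
    rw [smul_dotProduct, hux, smul_zero]
  rw [← Matrix.range_cons_cons_empty u x ![], finrank_span_eq_card hind, Fintype.card_fin]

namespace Matrix.IsHermitian

variable {m : Type*} [Fintype m] [DecidableEq m] {A : Matrix m m ℝ} (hA : A.IsHermitian)

lemma sum_dotProduct_eigenvectorBasis_mul (x y : m → ℝ) :
    ∑ i, (x ⬝ᵥ hA.eigenvectorBasis i) * (hA.eigenvectorBasis i ⬝ᵥ y) = x ⬝ᵥ y := by
  simpa [EuclideanSpace.inner_eq_star_dotProduct, dotProduct_comm, mul_comm] using
    hA.eigenvectorBasis.sum_inner_mul_inner (WithLp.toLp 2 y) (WithLp.toLp 2 x)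

lemma dotProduct_mulVec_eq_sum (y : m → ℝ) :
    y ⬝ᵥ A *ᵥ y = ∑ i, hA.eigenvalues i * (hA.eigenvectorBasis i ⬝ᵥ y) ^ 2 := by
  rw [← hA.sum_dotProduct_eigenvectorBasis_mul]
  refine Finset.sum_congr rfl fun i _ => ?_
  rw [dotProduct_comm, dotProduct_mulVec, ← mulVec_transpose, (isHermitian_iff_isSymm.mp hA).eq,
    mulVec_eigenvectorBasis, smul_dotProduct, smul_eq_mul, dotProduct_comm]
  ring

lemma dotProduct_self_eq_sum (y : m → ℝ) :
    y ⬝ᵥ y = ∑ i, (hA.eigenvectorBasis i ⬝ᵥ y) ^ 2 := by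
  rw [← hA.sum_dotProduct_eigenvectorBasis_mul]
  simp only [dotProduct_comm y, sq]

lemma mul_dotProduct_self_lt_of_forall_eigenvalues_le {c : ℝ} {y : m → ℝ} (hy : y ≠ 0)
    (horth : ∀ i, hA.eigenvalues i ≤ c → hA.eigenvectorBasis i ⬝ᵥ y = 0) :
    c * (y ⬝ᵥ y) < y ⬝ᵥ A *ᵥ y := by
  rw [hA.dotProduct_mulVec_eq_sum, hA.dotProduct_self_eq_sum, Finset.mul_sum]
  obtain ⟨j, hj⟩ : ∃ j, hA.eigenvectorBasis j ⬝ᵥ y ≠ 0 := by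
    by_contra! h
    exact hy (dotProduct_self_eq_zero.mp (by simp [hA.dotProduct_self_eq_sum, h]))
  refine Finset.sum_lt_sum (fun i _ => ?_) ⟨j, Finset.mem_univ j, ?_⟩
  · by_cases hi : hA.eigenvalues i ≤ c
    · simp [horth i hi]
    · exact mul_le_mul_of_nonneg_right (not_le.mp hi).le (sq_nonneg _)
  · have hcj : c < hA.eigenvalues j := not_le.mp fun h => hj (horth j h)
    exact mul_lt_mul_of_pos_right hcj (by positivity)

end Matrix.IsHermitian

lemma Matrix.IsHermitian.dotProduct_mulVec_le_of_mem_span_pair {m : Type*} [Fintype m]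
    {A : Matrix m m ℝ} (hA : A.IsHermitian) {u x : m → ℝ} (hAu : A *ᵥ u = 0)
    (hux : u ⬝ᵥ x = 0) {c : ℝ} (hc : 0 ≤ c) (hx : x ⬝ᵥ A *ᵥ x = c * (x ⬝ᵥ x)) :
    ∀ w ∈ Submodule.span ℝ {u, x}, w ⬝ᵥ A *ᵥ w ≤ c * (w ⬝ᵥ w) := by
  intro w hw
  obtain ⟨a, b, rfl⟩ := Submodule.mem_span_pair.mp hw
  have huAx : u ⬝ᵥ A *ᵥ x = 0 := by
    rw [dotProduct_mulVec, ← mulVec_transpose, (isHermitian_iff_isSymm.mp hA).eq, hAu,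
      zero_dotProduct]
  have hxu : x ⬝ᵥ u = 0 := by rw [dotProduct_comm, hux]
  have huu : 0 ≤ u ⬝ᵥ u := by simpa using dotProduct_star_self_nonneg u
  simp only [mulVec_add, mulVec_smul, hAu, smul_zero, zero_add, add_dotProduct, dotProduct_add,
    smul_dotProduct, dotProduct_smul, huAx, hx, hux, hxu, smul_eq_mul]
  nlinarith [mul_nonneg (mul_nonneg hc (mul_self_nonneg a)) huu]

theorem kthSmallest_le_of_forall_mem {m : Type*} [Fintype m] [DecidableEq m]
    {A : Matrix m m ℝ} (hA : A.IsHermitian) (W : Submodule ℝ (m → ℝ)) {k : ℕ} (hk : 0 < k)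
    (hW : k ≤ Module.finrank ℝ W) {c : ℝ} (hc : ∀ w ∈ W, w ⬝ᵥ A *ᵥ w ≤ c * (w ⬝ᵥ w)) :
    kthSmallest A k ≤ c := by
  set S := Finset.univ.filter fun i => hA.eigenvalues i ≤ c
  -- Otherwise some nonzero `w ∈ W` is orthogonal to every eigenvector with eigenvalue `≤ c`.
  have hS : k ≤ S.card := by
    by_contra! hlt
    let f : W →ₗ[ℝ] S → ℝ :=
      (Matrix.of fun (i : S) j => hA.eigenvectorBasis i j).mulVecLin ∘ₗ W.subtype
    obtain ⟨w, hwker, hw0⟩ := Submodule.exists_mem_ne_zero_of_ne_bot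
      (LinearMap.ker_ne_bot_of_finrank_lt (f := f) (by
        simp only [Module.finrank_fintype_fun_eq_card, Fintype.card_coe]
        omega))
    refine (hc w w.2).not_gt (hA.mul_dotProduct_self_lt_of_forall_eigenvalues_le
      (by simpa using hw0) fun i hi => ?_)
    simpa [f, mulVec, dotProduct] using
      congrFun (LinearMap.mem_ker.mp hwker) ⟨i, by simpa [S] using hi⟩
  rw [kthSmallest, eigsList, dif_pos hA]
  refine List.getD_le_of_lt_countP (Multiset.pairwise_sort _ _) ?_ 0
  rw [← Multiset.coe_countP, Multiset.sort_eq, Multiset.countP_map]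
  change k - 1 < S.card
  omega

section Laplacian

variable {n : ℕ} (M : Matrix (Fin n) (Fin n) ℝ)

lemma lap_mulVec_apply (x : Fin n → ℝ) (i : Fin n) :
    (Lap M *ᵥ x) i = ∑ j, M i j * (x i - x j) := by
  rw [Lap, sub_mulVec, Pi.sub_apply, mulVec_diagonal, mulVec, dotProduct, Finset.sum_mul,
    ← Finset.sum_sub_distrib]
  simp only [mul_sub]

lemma lap_mulVec_one : Lap M *ᵥ 1 = 0 := by
  ext i
  simp [lap_mulVec_apply]

lemma isHermitian_lap (hM : M.IsSymm) : (Lap M).IsHermitian :=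
  (isHermitian_diagonal _).sub (isHermitian_iff_isSymm.mpr hM)

end Laplacian

lemma isSymm_qp (n : ℕ) : (Qp n).IsSymm :=
  IsSymm.ext fun i j => by
    unfold Qp
    exact if_congr (by omega) rfl (if_congr (by omega) rfl (if_congr (by omega) rfl
      (if_congr (by omega) rfl (if_congr (by omega) rfl (if_congr (by omega) rfl
      (if_congr (by omega) rfl (if_congr (by omega) rfl rfl)))))))

lemma qp_mul_sub_of_three_le {n : ℕ} {p : Fin n} (hp : 3 ≤ p.val) (g : ℕ → ℝ) (j : Fin n) :
    Qp n p j * (g p - g j) = (if j.val = p.val - 1 then g p - g j else 0)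
      + (if j.val = p.val + 1 then g p - g j else 0) := by
  have hj := j.isLt
  unfold Qp
  dsimp only
  split_ifs <;> first | ring1 | (exfalso; omega) | (rw [show j.val = p.val by omega]; ring)

lemma lap_qp_mulVec_apply_of_three_le {n : ℕ} {p : Fin n} (hp : 3 ≤ p.val)
    (hpn : p.val + 2 ≤ n) (g : ℕ → ℝ) :
    (Lap (Qp n) *ᵥ fun j => g j) p = 2 * g p - g (p - 1) - g (p + 1) := by
  rw [lap_mulVec_apply]
  simp only [qp_mul_sub_of_three_le hp, Finset.sum_add_distrib]
  rw [sum_fin_ite_val_eq (by omega) (fun q => g p - g q),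
    sum_fin_ite_val_eq (by omega) (fun q => g p - g q)]
  ring

lemma sum_range_sin_mul_two_pi_div {m : ℕ} (hm : 1 < m) :
    ∑ t ∈ Finset.range m, sin (t * (2 * π / m)) = 0 := by
  have hroots := (Complex.isPrimitiveRoot_exp m (by omega)).geom_sum_eq_zero hm
  have hpow : ∀ t : ℕ, Complex.exp (2 * π * Complex.I / m) ^ t
      = Complex.exp ((t * (2 * π / m) : ℝ) * Complex.I) := fun t => by
    rw [← Complex.exp_nat_mul]
    push_cast
    ring_nf
  have := congrArg Complex.im hroots
  rwa [Complex.im_sum, Complex.zero_im, Finset.sum_congr rfl fun t _ => by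
    rw [hpow, Complex.exp_ofReal_mul_I_im]] at this

lemma two_mul_sin_sub_sin_sub_sin_add (t θ : ℝ) :
    2 * sin t - sin (t - θ) - sin (t + θ) = (2 - 2 * cos θ) * sin t := by
  rw [sin_sub, sin_add]
  ring

/-- In the 1-indexed labels of `Q'_n`, with `n = m + 3`: zero on vertices `1, 2, 3` and
`sin ((k - 3) θ)` on vertex `k ≥ 3`. -/
noncomputable def sinePath (m : ℕ) (θ : ℝ) (j : Fin (m + 3)) : ℝ :=
  sin (((j : ℕ) - 2 : ℕ) * θ)

lemma sinePath_ne_zero {m : ℕ} (hm : 0 < m) {θ : ℝ} (hθ : sin θ ≠ 0) : sinePath m θ ≠ 0 :=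
  fun h => hθ (by simpa [sinePath] using congrFun h (⟨3, by omega⟩ : Fin (m + 3)))

lemma one_dotProduct_sinePath {m : ℕ} (hm : 1 < m) : 1 ⬝ᵥ sinePath m (2 * π / m) = 0 := by
  simp only [one_dotProduct, sinePath]
  rw [Fin.sum_univ_eq_sum_range (fun q => sin ((q - 2 : ℕ) * (2 * π / m))),
    Finset.sum_range_succ', Finset.sum_range_succ', Finset.sum_range_succ]
  have hm0 : (m : ℝ) ≠ 0 := by positivity
  simp [show ∀ x : ℕ, x + 1 + 1 - 2 = x from fun x => by omega, sum_range_sin_mul_two_pi_div hm,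
    mul_div_cancel₀ _ hm0]

lemma sinePath_mul_lap_qp_mulVec {m : ℕ} {θ : ℝ} (hθ : sin (m * θ) = 0) (p : Fin (m + 3)) :
    sinePath m θ p * (Lap (Qp (m + 3)) *ᵥ sinePath m θ) p
      = (2 - 2 * cos θ) * (sinePath m θ p * sinePath m θ p) := by
  by_cases hp0 : p.val ≤ 2
  · simp [sinePath, Nat.sub_eq_zero_of_le hp0]
  by_cases hpm : p.val = m + 2
  · simp [sinePath, hpm, hθ]
  obtain ⟨t, ht⟩ : ∃ t, p.val = t + 3 := ⟨p.val - 3, by omega⟩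
  have hrow : (Lap (Qp (m + 3)) *ᵥ sinePath m θ) p
      = 2 * sin (((t + 1 : ℕ) : ℝ) * θ) - sin ((t : ℝ) * θ) - sin (((t + 2 : ℕ) : ℝ) * θ) := by
    unfold sinePath
    rw [lap_qp_mulVec_apply_of_three_le (by omega) (by omega) fun q => sin ((q - 2 : ℕ) * θ),
      show p.val + 1 - 2 = t + 2 by omega, show p.val - 1 - 2 = t by omega,
      show p.val - 2 = t + 1 by omega]
  rw [hrow]
  simp only [sinePath, ht, show t + 3 - 2 = t + 1 by omega]
  push_cast
  rw [show (t : ℝ) * θ = (t + 1) * θ - θ by ring, show ((t : ℝ) + 2) * θ = (t + 1) * θ + θ by ring,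
    two_mul_sin_sub_sin_sub_sin_add]
  ring

lemma dotProduct_lap_qp_mulVec_sinePath {m : ℕ} {θ : ℝ} (hθ : sin (m * θ) = 0) :
    sinePath m θ ⬝ᵥ Lap (Qp (m + 3)) *ᵥ sinePath m θ
      = (2 - 2 * cos θ) * (sinePath m θ ⬝ᵥ sinePath m θ) := by
  simp only [dotProduct, Finset.mul_sum, sinePath_mul_lap_qp_mulVec hθ]

theorem stmt6 (n : ℕ) (hn : 6 ≤ n) :
    kthSmallest (Lap (Qp n)) 2 ≤ 2 - 2 * Real.cos (2 * Real.pi / ((n : ℝ) - 3)) := by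
  obtain ⟨m, rfl⟩ : ∃ m, n = m + 3 := ⟨n - 3, by omega⟩
  rw [show ((m + 3 : ℕ) : ℝ) - 3 = m by push_cast; ring]
  have hm : (3 : ℝ) ≤ m := by exact_mod_cast (show 3 ≤ m by omega)
  set θ := 2 * π / m
  have hsinθ : sin θ ≠ 0 := (sin_pos_of_pos_of_lt_pi (by positivity) (by
    rw [div_lt_iff₀ (by positivity)]; nlinarith [pi_pos])).ne'
  have hsinmθ : sin (m * θ) = 0 := by
    rw [mul_div_cancel₀ _ (by positivity), sin_two_pi]
  have hL := isHermitian_lap _ (isSymm_qp (m + 3))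
  have hx := one_dotProduct_sinePath (m := m) (by omega)
  refine kthSmallest_le_of_forall_mem hL _ two_pos
    (finrank_span_pair_of_dotProduct_eq_zero one_ne_zero (sinePath_ne_zero (by omega) hsinθ)
      hx).ge ?_
  exact hL.dotProduct_mulVec_le_of_mem_span_pair (lap_mulVec_one _) hx
    (by linarith [cos_le_one θ]) (dotProduct_lap_qp_mulVec_sinePath hsinmθ)
end

section
/- Let n ≥ 4 be an integer. Then the largest eigenvalue of Q'_n equals n, and the second-largest eigenvalue satisfies λ₂(Q'_n) < n. -/
open Matrix

/-! `Q'_n` is a nonnegative symmetric matrix whose rows all sum to `n`, so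
`n ‖x‖² - xᵀ Q'_n x = ½ ∑ᵢⱼ Q'_n[i,j] (xᵢ - xⱼ)² ≥ 0`. Hence every eigenvalue is at most `n`,
the all-ones vector attains `n`, and an eigenvector for `n` takes equal values at `i` and `j`
whenever `Q'_n[i,j] > 0`. The entries `Q'_n[k,k+1]` are all positive, so that eigenvector is
constant and `n` is a simple eigenvalue. -/

open Module.End

namespace Matrix

theorem mul_sub_sq_nonneg {ι : Type*} {A : Matrix ι ι ℝ} (hoff : ∀ i j, i ≠ j → 0 ≤ A i j)
    (x : ι → ℝ) (i j : ι) : 0 ≤ A i j * (x i - x j) ^ 2 := by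
  rcases eq_or_ne i j with rfl | hij
  · simp
  · exact mul_nonneg (hoff i j hij) (sq_nonneg _)

namespace IsSymm

variable {ι : Type*} [Fintype ι] {A : Matrix ι ι ℝ} {r : ℝ}

theorem sum_mul_sub_sq_eq (hA : A.IsSymm) (hrow : ∀ i, ∑ j, A i j = r) (x : ι → ℝ) :
    ∑ i, ∑ j, A i j * (x i - x j) ^ 2 = 2 * (r * (x ⬝ᵥ x) - x ⬝ᵥ A *ᵥ x) := by
  have hcol : ∀ j, ∑ i, A i j = r := fun j => by simpa only [hA.apply] using hrow j
  calc ∑ i, ∑ j, A i j * (x i - x j) ^ 2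
      = ∑ i, x i ^ 2 * ∑ j, A i j + ∑ j, x j ^ 2 * ∑ i, A i j
          - 2 * ∑ i, x i * ∑ j, A i j * x j := by
        simp only [Finset.mul_sum]
        rw [Finset.sum_comm (f := fun j i => x j ^ 2 * A i j), ← Finset.sum_add_distrib,
          ← Finset.sum_sub_distrib]
        refine Finset.sum_congr rfl fun i _ => ?_
        rw [← Finset.sum_add_distrib, ← Finset.sum_sub_distrib]
        exact Finset.sum_congr rfl fun j _ => by ring
    _ = 2 * (r * (x ⬝ᵥ x) - x ⬝ᵥ A *ᵥ x) := by
        simp only [hrow, hcol, dotProduct, mulVec, ← Finset.sum_mul, ← sq]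
        ring

theorem dotProduct_mulVec_le (hA : A.IsSymm) (hrow : ∀ i, ∑ j, A i j = r)
    (hoff : ∀ i j, i ≠ j → 0 ≤ A i j) (x : ι → ℝ) : x ⬝ᵥ A *ᵥ x ≤ r * (x ⬝ᵥ x) := by
  have hid := hA.sum_mul_sub_sq_eq hrow x
  have hnonneg : 0 ≤ ∑ i, ∑ j, A i j * (x i - x j) ^ 2 :=
    Finset.sum_nonneg fun i _ => Finset.sum_nonneg fun j _ => mul_sub_sq_nonneg hoff x i j
  linarith

theorem eq_of_mulVec_eq_smul (hA : A.IsSymm) (hrow : ∀ i, ∑ j, A i j = r)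
    (hoff : ∀ i j, i ≠ j → 0 ≤ A i j) {x : ι → ℝ} (hx : A *ᵥ x = r • x) {i j : ι} (hij : 0 < A i j) :
    x i = x j := by
  have hsum : ∑ i, ∑ j, A i j * (x i - x j) ^ 2 = 0 := by
    rw [hA.sum_mul_sub_sq_eq hrow x, hx, dotProduct_smul, smul_eq_mul, sub_self, mul_zero]
  have hterm : A i j * (x i - x j) ^ 2 = 0 := by
    rw [Finset.sum_eq_zero_iff_of_nonneg fun i _ => Finset.sum_nonneg fun j _ =>
      mul_sub_sq_nonneg hoff x i j] at hsum
    exact (Finset.sum_eq_zero_iff_of_nonneg fun j _ => mul_sub_sq_nonneg hoff x i j).mp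
      (hsum i (Finset.mem_univ _)) j (Finset.mem_univ _)
  rw [mul_eq_zero, or_iff_right hij.ne', sq_eq_zero_iff, sub_eq_zero] at hterm
  exact hterm

end IsSymm

theorem mem_eigenspace_toEuclideanLin_iff {ι : Type*} [Fintype ι] [DecidableEq ι]
    {A : Matrix ι ι ℝ} {μ : ℝ} {v : EuclideanSpace ℝ ι} :
    v ∈ eigenspace (toEuclideanLin A) μ ↔ A *ᵥ v.ofLp = μ • v.ofLp := by
  rw [mem_eigenspace_iff, ← (WithLp.ofLp_injective 2).eq_iff]
  rfl

end Matrix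

namespace Matrix.IsHermitian

variable {ι : Type*} [Fintype ι] [DecidableEq ι] {A : Matrix ι ι ℝ} (hA : A.IsHermitian)

theorem map_eigenvalues_eq_map_eigenvalues₀ :
    Finset.univ.val.map hA.eigenvalues = Finset.univ.val.map hA.eigenvalues₀ := by
  rw [← Multiset.map_univ_val_equiv (Fintype.equivOfCardEq (Fintype.card_fin _)).symm,
    Multiset.map_map]
  rfl

theorem eigsList_eq_reverse_ofFn : eigsList A = (List.ofFn hA.eigenvalues₀).reverse := by
  rw [eigsList, dif_pos hA, map_eigenvalues_eq_map_eigenvalues₀, Fin.univ_val_map,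
    ← Multiset.coe_reverse (List.ofFn _), Multiset.coe_sort]
  exact List.mergeSort_eq_self _ (List.pairwise_reverse.mpr
    (List.sortedGE_iff_pairwise.mp hA.eigenvalues₀_antitone.sortedGE_ofFn))

theorem kthLargest_succ {k : ℕ} (hk : k < Fintype.card ι) :
    kthLargest A (k + 1) = hA.eigenvalues₀ ⟨k, hk⟩ := by
  rw [kthLargest, hA.eigsList_eq_reverse_ofFn,
    List.getD_eq_getElem _ _ (by simp only [List.length_reverse, List.length_ofFn]; omega),
    List.getElem_reverse, List.getElem_ofFn]
  congr 2
  simp only [List.length_ofFn]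
  omega

theorem eigenvalues₀_le {r : ℝ} (h : ∀ x, x ⬝ᵥ A *ᵥ x ≤ r * (x ⬝ᵥ x))
    (i : Fin (Fintype.card ι)) : hA.eigenvalues₀ i ≤ r := by
  obtain ⟨v, hv, hv0⟩ := (LinearMap.IsSymmetric.hasEigenvalue_eigenvalues
    (isSymmetric_toEuclideanLin_iff.mpr hA) finrank_euclideanSpace i).exists_hasEigenvector
  have hAv := mem_eigenspace_toEuclideanLin_iff.mp hv
  have hpos : 0 < v.ofLp ⬝ᵥ v.ofLp := by
    refine lt_of_le_of_ne (Finset.sum_nonneg fun j _ => mul_self_nonneg _) (Ne.symm ?_)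
    simpa using hv0
  have hq := h v.ofLp
  rw [hAv, dotProduct_smul, smul_eq_mul] at hq
  exact le_of_mul_le_mul_right hq hpos

theorem eigenvalues₀_zero_eq {r : ℝ} (hle : ∀ i, hA.eigenvalues₀ i ≤ r) {x : ι → ℝ}
    (hx0 : x ≠ 0) (hx : A *ᵥ x = r • x) (h0 : 0 < Fintype.card ι) :
    hA.eigenvalues₀ ⟨0, h0⟩ = r := by
  have hr : HasEigenvalue (toEuclideanLin A) r :=
    hasEigenvalue_of_hasEigenvector (x := WithLp.toLp 2 x)
      ⟨mem_eigenspace_toEuclideanLin_iff.mpr hx, by simpa using hx0⟩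
  obtain ⟨i, hi⟩ := LinearMap.IsSymmetric.exists_eigenvalues_eq
    (isSymmetric_toEuclideanLin_iff.mpr hA) finrank_euclideanSpace hr
  exact (hle _).antisymm (hi ▸ hA.eigenvalues₀_antitone (Nat.zero_le i.val))

theorem card_eigenvalues₀_eq_le_one {r : ℝ} (u : ι → ℝ)
    (h : ∀ x, A *ᵥ x = r • x → ∃ c : ℝ, x = c • u) :
    Finset.card {i | hA.eigenvalues₀ i = r} ≤ 1 := by
  have hsub : eigenspace (toEuclideanLin A) r ≤ Submodule.span ℝ {WithLp.toLp 2 u} := by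
    intro v hv
    obtain ⟨c, hc⟩ := h _ (mem_eigenspace_toEuclideanLin_iff.mp hv)
    exact Submodule.mem_span_singleton.mpr ⟨c, by simpa using congrArg (WithLp.toLp 2) hc.symm⟩
  calc Finset.card {i | hA.eigenvalues₀ i = r}
      = Module.finrank ℝ (eigenspace (toEuclideanLin A) r) :=
        LinearMap.IsSymmetric.card_filter_eigenvalues_eq _ _ r
    _ ≤ 1 := (Submodule.finrank_mono hsub).trans <| by
        simpa using finrank_span_le_card ({WithLp.toLp 2 u} : Set (EuclideanSpace ℝ ι))

theorem eigenvalues₀_one_lt {r : ℝ} (hle : ∀ i, hA.eigenvalues₀ i ≤ r)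
    (hsimple : Finset.card {i | hA.eigenvalues₀ i = r} ≤ 1) (h1 : 1 < Fintype.card ι) :
    hA.eigenvalues₀ ⟨1, h1⟩ < r := by
  refine (hle _).lt_of_ne fun h => ?_
  have h0 : hA.eigenvalues₀ ⟨0, by omega⟩ = r :=
    (hle _).antisymm (h ▸ hA.eigenvalues₀_antitone (Nat.zero_le 1))
  exact hsimple.not_gt (Finset.one_lt_card.mpr ⟨_, by simpa using h0, _, by simpa using h, by simp⟩)

end Matrix.IsHermitian

theorem Fin.sum_univ_ite_val_eq {n c : ℕ} (hc : c < n) (v : ℝ) :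
    ∑ j : Fin n, (if j.val = c then v else 0) = v := by
  rw [Fin.sum_univ_eq_sum_range (fun j => if j = c then v else 0), Finset.sum_ite_eq',
    if_pos (Finset.mem_range.mpr hc)]

namespace Qp

variable {n : ℕ}

theorem isSymm (n : ℕ) : (Qp n).IsSymm := by
  ext i j
  dsimp only [transpose_apply, Qp]
  exact if_congr (by tauto) rfl <| if_congr (by tauto) rfl <| if_congr (by tauto) rfl <|
    if_congr (by tauto) rfl <| if_congr (by tauto) rfl <| if_congr (by tauto) rfl <|
    if_congr (by omega) rfl <| if_congr (by tauto) rfl rfl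

theorem nonneg (hn : 4 ≤ n) (i j : Fin n) : 0 ≤ Qp n i j := by
  have : (4 : ℝ) ≤ n := by exact_mod_cast hn
  dsimp only [Qp]
  split_ifs <;> linarith

variable {i : Fin n}

-- The rows of `Qp n`, indexed from `0`: row `i.val` is row `i.val + 1` of `Q'_n`.

theorem apply_of_val_eq_zero (hn : 4 ≤ n) (hi : i.val = 0) (j : Fin n) :
    Qp n i j = (if j.val = 1 then (n : ℝ) - 2 else 0) + (if j.val = 2 then 2 else 0) := by
  dsimp only [Qp]
  split_ifs <;> first | omega | ring

theorem apply_of_val_eq_one (hi : i.val = 1) (j : Fin n) :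
    Qp n i j = (if j.val = 0 then (n : ℝ) - 2 else 0) + (if j.val = 1 then 1 else 0) +
      (if j.val = 2 then 1 else 0) := by
  dsimp only [Qp]
  split_ifs <;> first | omega | ring

theorem apply_of_val_eq_two (hi : i.val = 2) (j : Fin n) :
    Qp n i j = (if j.val = 0 then 2 else 0) + (if j.val = 1 then 1 else 0) +
      (if j.val = 2 then (n : ℝ) - 4 else 0) + (if j.val = 3 then 1 else 0) := by
  dsimp only [Qp]
  split_ifs <;> first | omega | ring

theorem apply_of_three_le_val (hi : 3 ≤ i.val) (hin : i.val + 1 < n) (j : Fin n) :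
    Qp n i j = (if j.val = i.val - 1 then 1 else 0) + (if j.val = i.val then (n : ℝ) - 2 else 0) +
      (if j.val = i.val + 1 then 1 else 0) := by
  dsimp only [Qp]
  split_ifs <;> first | omega | ring

theorem apply_of_val_eq_last (hn : 4 ≤ n) (hi : i.val + 1 = n) (j : Fin n) :
    Qp n i j = (if j.val = n - 2 then 1 else 0) + (if j.val = n - 1 then (n : ℝ) - 1 else 0) := by
  dsimp only [Qp]
  split_ifs <;> first | omega | ring

theorem row_sum (hn : 4 ≤ n) (i : Fin n) : ∑ j, Qp n i j = n := by
  obtain hi | hi | hi | ⟨hi, hin⟩ | hi :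
      i.val = 0 ∨ i.val = 1 ∨ i.val = 2 ∨ (3 ≤ i.val ∧ i.val + 1 < n) ∨ i.val + 1 = n := by
    omega
  · simp (disch := omega) only [apply_of_val_eq_zero hn hi, Finset.sum_add_distrib,
      Fin.sum_univ_ite_val_eq]
    ring
  · simp (disch := omega) only [apply_of_val_eq_one hi, Finset.sum_add_distrib,
      Fin.sum_univ_ite_val_eq]
    ring
  · simp (disch := omega) only [apply_of_val_eq_two hi, Finset.sum_add_distrib,
      Fin.sum_univ_ite_val_eq]
    ring
  · simp (disch := omega) only [apply_of_three_le_val hi hin, Finset.sum_add_distrib,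
      Fin.sum_univ_ite_val_eq]
    ring
  · simp (disch := omega) only [apply_of_val_eq_last hn hi, Finset.sum_add_distrib,
      Fin.sum_univ_ite_val_eq]
    ring

theorem mulVec_one (hn : 4 ≤ n) : Qp n *ᵥ 1 = (n : ℝ) • 1 := by
  ext i
  simp [mulVec, dotProduct, row_sum hn i]

theorem apply_succ_pos (hn : 4 ≤ n) {k : ℕ} (hk : k + 1 < n) :
    0 < Qp n ⟨k, by omega⟩ ⟨k + 1, hk⟩ := by
  have : (4 : ℝ) ≤ n := by exact_mod_cast hn
  dsimp only [Qp]
  split_ifs <;> first | omega | linarith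

theorem exists_eq_smul_one (hn : 4 ≤ n) {x : Fin n → ℝ}
    (hx : ∀ i j, 0 < Qp n i j → x i = x j) : ∃ c : ℝ, x = c • 1 := by
  have hconst : ∀ k (hk : k < n), x ⟨k, hk⟩ = x ⟨0, by omega⟩ := by
    intro k hk
    induction k with
    | zero => rfl
    | succ k ih => rw [← ih (by omega), hx _ _ (apply_succ_pos hn hk)]
  exact ⟨x ⟨0, by omega⟩, funext fun k => by simpa using hconst k.val k.isLt⟩

end Qp

theorem stmt16 (n : ℕ) (hn : 4 ≤ n) :
    kthLargest (Qp n) 1 = (n : ℝ) ∧ kthLargest (Qp n) 2 < (n : ℝ) := by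
  have hA : (Qp n).IsHermitian := isHermitian_iff_isSymm.mpr (Qp.isSymm n)
  have hoff : ∀ i j, i ≠ j → 0 ≤ Qp n i j := fun i j _ => Qp.nonneg hn i j
  have hle := hA.eigenvalues₀_le ((Qp.isSymm n).dotProduct_mulVec_le (Qp.row_sum hn) hoff)
  have hsimple := hA.card_eigenvalues₀_eq_le_one 1 fun x hx =>
    Qp.exists_eq_smul_one hn fun i j => (Qp.isSymm n).eq_of_mulVec_eq_smul (Qp.row_sum hn) hoff hx
  have hcard : Fintype.card (Fin n) = n := Fintype.card_fin n
  refine ⟨?_, ?_⟩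
  · rw [← zero_add 1, hA.kthLargest_succ (by omega)]
    exact hA.eigenvalues₀_zero_eq hle (fun h => by simpa using congrFun h ⟨0, by omega⟩)
      (Qp.mulVec_one hn) _
  · rw [hA.kthLargest_succ (k := 1) (by omega)]
    exact hA.eigenvalues₀_one_lt hle hsimple _
end

section
/- Let n ≥ 15 be an integer, let μ = μ₂(𝔏(Q_n)) be the second-smallest eigenvalue of 𝔏(Q_n), and let v = (v₁,…,v_n)ᵀ be a unit eigenvector of 𝔏(Q_n) with eigenvalue μ that is entrywise monotone (v_i ≤ v_{i+1} for all 1 ≤ i ≤ n−1) and skew-symmetric (v_i = −v_{n+1−i} for all 1 ≤ i ≤ n). Then Σ_{i=1}^{n−1} (v_i − v_{i+1})² + 2(v_{n−1} − v_n)² < (n/(n+1))·μ·v_n². -/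
open Matrix

/-!
Write `b = v_n`, `c = v_{n-1}`, `S = ∑ (v_i - v_{i+1})²` and `T = ∑ (v_i - v_{i+2})²`.
Since `Q_n` is a band matrix, the Rayleigh quotient of the unit eigenvector gives
`μ = (n - 2) S + 2 T`, and the last row of `𝔏(Q_n) v = μ v` gives `μ b ≥ n (b - c)`.
Monotonicity and skew-symmetry give `2 S - 2 (b - c)² ≤ T ≤ 4 S`, `S ≤ (v_n - v_1)² = 4 b²`,
`4 b² ≤ (n - 1) S` (Cauchy–Schwarz) and, from `|v_i| ≤ c` for `1 < i < n`, `1 ≤ 2 b² + (n - 2) c²`.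
These estimates imply the claim by real arithmetic, after a case split on the size of `b²`;
for large `b²` the bound is a concave quadratic in `b²`, checked at the endpoints, and positivity at
`b² = 1` is where `n ≥ 15` is needed.
-/

lemma Lap_mulVec_apply {n : ℕ} (M : Matrix (Fin n) (Fin n) ℝ) (v : Fin n → ℝ) (i : Fin n) :
    (Lap M *ᵥ v) i = ∑ j, M i j * (v i - v j) := by
  simp [Lap, mulVec, dotProduct, sub_mul, diagonal_apply, mul_sub, Finset.sum_mul]

lemma sum_sum_mul_sub_mul_self {ι : Type*} [Fintype ι] (K : ι → ι → ℝ)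
    (hK : ∀ i j, K i j = K j i) (v : ι → ℝ) :
    ∑ i, ∑ j, K i j * (v i - v j) * v i = (∑ i, ∑ j, K i j * (v i - v j) ^ 2) / 2 := by
  have hswap : ∑ i, ∑ j, K i j * (v i - v j) * v i = ∑ i, ∑ j, K i j * (v j - v i) * v j := by
    rw [Finset.sum_comm]
    simp only [hK]
  have hsum : ∑ i, ∑ j, K i j * (v i - v j) ^ 2 =
      ∑ i, ∑ j, K i j * (v i - v j) * v i + ∑ i, ∑ j, K i j * (v j - v i) * v j := by
    simp only [← Finset.sum_add_distrib]
    exact Finset.sum_congr rfl fun i _ => Finset.sum_congr rfl fun j _ => by ring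
  linarith

def qWeight (n k : ℕ) : ℝ := (if k = 1 then (n : ℝ) - 2 else 0) + (if k = 2 then 2 else 0)

lemma Qmat_mul_sub {n : ℕ} (v : Fin n → ℝ) (i j : Fin n) :
    Qmat n i j * (v i - v j) = qWeight n ((i : ℤ) - j).natAbs * (v i - v j) := by
  rcases eq_or_ne i j with rfl | hij
  · simp
  · have hk : ((i : ℤ) - j).natAbs ≠ 0 := by
      have := Fin.val_ne_of_ne hij
      omega
    simp only [Qmat, qWeight, hk, if_false]
    split_ifs <;> simp_all

lemma sum_range_sum_range_ite_eq_add (n k : ℕ) (f : ℕ → ℕ → ℝ) :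
    ∑ a ∈ Finset.range n, ∑ b ∈ Finset.range n, (if b = a + k then f a b else 0) =
      ∑ a ∈ Finset.range (n - k), f a (a + k) := by
  simp only [Finset.sum_ite_eq', Finset.mem_range]
  rw [← Finset.sum_filter]
  congr 1
  ext a
  simp only [Finset.mem_filter, Finset.mem_range]
  omega

lemma sum_range_sum_range_natAbs_sub_eq (n k : ℕ) (hk : 0 < k) (f : ℕ → ℕ → ℝ) :
    ∑ a ∈ Finset.range n, ∑ b ∈ Finset.range n,
        (if ((a : ℤ) - b).natAbs = k then f a b else 0) =
      ∑ a ∈ Finset.range (n - k), (f a (a + k) + f (a + k) a) := by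
  have hsplit : ∀ a b : ℕ, (if ((a : ℤ) - b).natAbs = k then f a b else 0) =
      (if b = a + k then f a b else 0) + (if a = b + k then f a b else 0) := by
    intro a b
    by_cases h₁ : b = a + k
    · rw [if_pos (by omega), if_pos h₁, if_neg (by omega), add_zero]
    · by_cases h₂ : a = b + k
      · rw [if_pos (by omega), if_neg h₁, if_pos h₂, zero_add]
      · rw [if_neg (by omega), if_neg h₁, if_neg h₂, add_zero]
  simp only [hsplit, Finset.sum_add_distrib]
  rw [sum_range_sum_range_ite_eq_add,
    Finset.sum_comm (γ := ℕ) (f := fun a b => if a = b + k then f a b else 0),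
    sum_range_sum_range_ite_eq_add]

lemma qWeight_mul (n k : ℕ) (x : ℝ) :
    qWeight n k * x = (if k = 1 then ((n : ℝ) - 2) * x else 0) + (if k = 2 then 2 * x else 0) := by
  simp only [qWeight, add_mul, ite_mul, zero_mul]

lemma dotProduct_Lap_Qmat_mulVec {n : ℕ} (v : Fin n → ℝ) (w : ℕ → ℝ)
    (hwv : ∀ i : Fin n, v i = w i) :
    v ⬝ᵥ (Lap (Qmat n) *ᵥ v) = ((n : ℝ) - 2) * ∑ k ∈ Finset.range (n - 1), (w k - w (k + 1)) ^ 2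
      + 2 * ∑ k ∈ Finset.range (n - 2), (w k - w (k + 2)) ^ 2 := by
  have hK : ∀ i j : Fin n, qWeight n ((i : ℤ) - j).natAbs = qWeight n ((j : ℤ) - i).natAbs :=
    fun i j => by rw [← Int.natAbs_neg, neg_sub]
  calc v ⬝ᵥ (Lap (Qmat n) *ᵥ v)
      = ∑ i : Fin n, ∑ j : Fin n, qWeight n ((i : ℤ) - j).natAbs * (v i - v j) * v i := by
        simp only [dotProduct, Lap_mulVec_apply, Qmat_mul_sub, Finset.mul_sum]
        exact Finset.sum_congr rfl fun i _ => Finset.sum_congr rfl fun j _ => by ring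
    _ = (∑ a ∈ Finset.range n, ∑ b ∈ Finset.range n,
          qWeight n ((a : ℤ) - b).natAbs * (w a - w b) ^ 2) / 2 := by
        rw [sum_sum_mul_sub_mul_self _ hK]
        simp only [hwv]
        rw [Fin.sum_univ_eq_sum_range
          (fun a => ∑ j : Fin n, qWeight n ((a : ℤ) - j).natAbs * (w a - w j) ^ 2)]
        exact congrArg (· / 2) <| Finset.sum_congr rfl fun a _ =>
          Fin.sum_univ_eq_sum_range (fun b => qWeight n ((a : ℤ) - b).natAbs * (w a - w b) ^ 2) n
    _ = _ := by
        simp only [qWeight_mul, Finset.sum_add_distrib]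
        rw [sum_range_sum_range_natAbs_sub_eq _ _ one_pos,
          sum_range_sum_range_natAbs_sub_eq _ _ two_pos, add_div, Finset.sum_div, Finset.sum_div,
          Finset.mul_sum, Finset.mul_sum]
        congr 1 <;> exact Finset.sum_congr rfl fun _ _ => by ring

lemma Lap_Qmat_mulVec_last {n : ℕ} (hn : 3 ≤ n) (v : Fin n → ℝ) (w : ℕ → ℝ)
    (hwv : ∀ i : Fin n, v i = w i) :
    (Lap (Qmat n) *ᵥ v) ⟨n - 1, by omega⟩ =
      ((n : ℝ) - 2) * (w (n - 1) - w (n - 2)) + 2 * (w (n - 1) - w (n - 3)) := by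
  rw [Lap_mulVec_apply]
  simp only [Qmat_mul_sub]
  simp only [hwv]
  rw [Fin.sum_univ_eq_sum_range
    (fun b => qWeight n (((n - 1 : ℕ) : ℤ) - b).natAbs * (w (n - 1) - w b))]
  obtain ⟨m, rfl⟩ : ∃ m, n = m + 3 := ⟨n - 3, by omega⟩
  simp only [show m + 3 - 1 = m + 2 by omega, show m + 3 - 2 = m + 1 by omega,
    show m + 3 - 3 = m by omega]
  have hfar : ∑ b ∈ Finset.range m,
      qWeight (m + 3) (((m + 2 : ℕ) : ℤ) - b).natAbs * (w (m + 2) - w b) = 0 :=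
    Finset.sum_eq_zero fun b hb => by
      have := Finset.mem_range.1 hb
      rw [qWeight, if_neg (by omega), if_neg (by omega), add_zero, zero_mul]
  rw [Finset.sum_range_succ, Finset.sum_range_succ, Finset.sum_range_succ, hfar]
  norm_num [qWeight]
  ring

lemma exists_monotone_extension {n : ℕ} (hn : 0 < n) (v : Fin n → ℝ)
    (hmono : ∀ (i : Fin n) (h : i.val + 1 < n), v i ≤ v ⟨i.val + 1, h⟩) :
    ∃ w : ℕ → ℝ, Monotone w ∧ ∀ i : Fin n, v i = w i := by
  refine ⟨fun a => v ⟨min a (n - 1), by omega⟩, monotone_nat_of_le_succ fun a => ?_,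
    fun i => congrArg v (Fin.ext (min_eq_left (by omega)).symm)⟩
  by_cases ha : a + 1 < n
  · calc v ⟨min a (n - 1), _⟩ = v ⟨a, by omega⟩ := congrArg v (Fin.ext (min_eq_left (by omega)))
      _ ≤ v ⟨a + 1, ha⟩ := hmono ⟨a, by omega⟩ ha
      _ = v ⟨min (a + 1) (n - 1), _⟩ := congrArg v (Fin.ext (min_eq_left (by omega)).symm)
  · exact le_of_eq (congrArg v (Fin.ext (show min a (n - 1) = min (a + 1) (n - 1) by omega)))

lemma sum_range_add_succ (f : ℕ → ℝ) (m : ℕ) :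
    ∑ k ∈ Finset.range m, (f k + f (k + 1)) = 2 * ∑ k ∈ Finset.range (m + 1), f k - f 0 - f m := by
  have h₁ := Finset.sum_range_succ f m
  have h₂ := Finset.sum_range_succ' f m
  rw [Finset.sum_add_distrib]
  linarith

lemma sq_sub_le_mul_sum_sq_sub_succ (w : ℕ → ℝ) (m : ℕ) :
    (w m - w 0) ^ 2 ≤ m * ∑ k ∈ Finset.range m, (w k - w (k + 1)) ^ 2 := by
  have h := sq_sum_le_card_mul_sum_sq (s := Finset.range m) (f := fun k => w k - w (k + 1))
  rwa [Finset.sum_range_sub', Finset.card_range, ← neg_sub, neg_sq] at h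

lemma four_mul_sq_le_mul_sum_sq_of_skew {w : ℕ → ℝ} {n : ℕ} (hn : 0 < n)
    (hskew : ∀ a < n, w a = -w (n - 1 - a)) :
    4 * w (n - 1) ^ 2 ≤ ((n : ℝ) - 1) * ∑ k ∈ Finset.range (n - 1), (w k - w (k + 1)) ^ 2 := by
  have h := sq_sub_le_mul_sum_sq_sub_succ w (n - 1)
  rw [hskew 0 hn, Nat.cast_sub hn, Nat.cast_one, Nat.sub_zero] at h
  linarith

lemma sum_sq_sub_two_le (w : ℕ → ℝ) (m : ℕ) :
    ∑ k ∈ Finset.range m, (w k - w (k + 2)) ^ 2 ≤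
      4 * ∑ k ∈ Finset.range (m + 1), (w k - w (k + 1)) ^ 2 := by
  have h := Finset.sum_le_sum fun k (_ : k ∈ Finset.range m) =>
    (by nlinarith [sq_nonneg (w k - 2 * w (k + 1) + w (k + 2))] :
      (w k - w (k + 2)) ^ 2 ≤ 2 * ((w k - w (k + 1)) ^ 2 + (w (k + 1) - w (k + 1 + 1)) ^ 2))
  rw [← Finset.mul_sum, sum_range_add_succ (fun k => (w k - w (k + 1)) ^ 2)] at h
  nlinarith [sq_nonneg (w 0 - w 1), sq_nonneg (w m - w (m + 1))]

namespace Monotone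

variable {w : ℕ → ℝ}

lemma sum_sq_sub_succ_le (hw : Monotone w) (m : ℕ) :
    ∑ k ∈ Finset.range m, (w k - w (k + 1)) ^ 2 ≤ (w m - w 0) ^ 2 := by
  calc ∑ k ∈ Finset.range m, (w k - w (k + 1)) ^ 2
      = ∑ k ∈ Finset.range m, (w (k + 1) - w k) ^ 2 := Finset.sum_congr rfl fun k _ => by ring
    _ ≤ (∑ k ∈ Finset.range m, (w (k + 1) - w k)) ^ 2 :=
        Finset.sum_sq_le_sq_sum_of_nonneg fun k _ => sub_nonneg.2 (hw k.le_succ)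
    _ = (w m - w 0) ^ 2 := by rw [Finset.sum_range_sub]

lemma le_sum_sq_sub_two (hw : Monotone w) (m : ℕ) :
    2 * ∑ k ∈ Finset.range (m + 1), (w k - w (k + 1)) ^ 2 - (w 0 - w 1) ^ 2 - (w m - w (m + 1)) ^ 2
      ≤ ∑ k ∈ Finset.range m, (w k - w (k + 2)) ^ 2 := by
  rw [← sum_range_add_succ (fun k => (w k - w (k + 1)) ^ 2)]
  refine Finset.sum_le_sum fun k _ => ?_
  nlinarith [mul_nonneg (sub_nonneg.2 (hw k.le_succ)) (sub_nonneg.2 (hw (k + 1).le_succ))]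

variable {n : ℕ} (hw : Monotone w) (hskew : ∀ a < n, w a = -w (n - 1 - a))
include hw hskew

lemma abs_le_of_skew {a : ℕ} (ha : 1 ≤ a) (ha' : a ≤ n - 2) : |w a| ≤ w (n - 2) := by
  have h1 : w 1 = -w (n - 2) := by rw [hskew 1 (by omega)]; rfl
  exact abs_le.2 ⟨h1 ▸ hw ha, hw ha'⟩

lemma one_le_of_sum_sq (hn : 3 ≤ n) (hunit : ∑ a ∈ Finset.range n, w a ^ 2 = 1) :
    1 ≤ 2 * w (n - 1) ^ 2 + ((n : ℝ) - 2) * w (n - 2) ^ 2 := by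
  obtain ⟨m, rfl⟩ : ∃ m, n = m + 2 := ⟨n - 2, by omega⟩
  have hmid : ∑ k ∈ Finset.range m, w (k + 1) ^ 2 ≤ m * w m ^ 2 := by
    have h := Finset.sum_le_card_nsmul (Finset.range m) (fun k => w (k + 1) ^ 2) (w m ^ 2)
      fun k hk => by
        have h := abs_le.1 (abs_le_of_skew hw hskew (a := k + 1) (by omega)
          (by have := Finset.mem_range.1 hk; omega))
        rw [Nat.add_sub_cancel] at h
        exact sq_le_sq' h.1 h.2
    simpa using h
  have h0 : w 0 = -w (m + 1) := hskew 0 (by omega)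
  rw [Finset.sum_range_succ, Finset.sum_range_succ', h0] at hunit
  simp only [show m + 2 - 1 = m + 1 by omega, Nat.add_sub_cancel]
  push_cast
  nlinarith

lemma sum_sq_sub_succ_le_of_skew (hn : 0 < n) :
    ∑ k ∈ Finset.range (n - 1), (w k - w (k + 1)) ^ 2 ≤ 4 * w (n - 1) ^ 2 := by
  have h := hw.sum_sq_sub_succ_le (n - 1)
  rw [hskew 0 hn, Nat.sub_zero] at h
  linarith

lemma le_sum_sq_sub_two_of_skew (hn : 3 ≤ n) :
    2 * ∑ k ∈ Finset.range (n - 1), (w k - w (k + 1)) ^ 2 - 2 * (w (n - 1) - w (n - 2)) ^ 2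
      ≤ ∑ k ∈ Finset.range (n - 2), (w k - w (k + 2)) ^ 2 := by
  have h := hw.le_sum_sq_sub_two (n - 2)
  rw [hskew 0 (by omega), hskew 1 (by omega), show n - 2 + 1 = n - 1 by omega,
    show n - 1 - 1 = n - 2 by omega, Nat.sub_zero] at h
  linarith

end Monotone

lemma quadratic_pos_of_endpoints {A B C x y t : ℝ} (hC : 0 ≤ C) (hxt : x ≤ t) (hty : t ≤ y)
    (hx : 0 < A * x - B - C * x ^ 2) (hy : 0 < A * y - B - C * y ^ 2) :
    0 < A * t - B - C * t ^ 2 := by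
  rcases hty.lt_or_eq with hty | rfl
  · have key : (y - x) * (A * t - B - C * t ^ 2) = (y - t) * (A * x - B - C * x ^ 2)
        + (t - x) * (A * y - B - C * y ^ 2) + C * (y - x) * (t - x) * (y - t) := by ring
    have hpos : 0 < (y - x) * (A * t - B - C * t ^ 2) := by
      rw [key]
      have h₁ := mul_pos (sub_pos.2 hty) hx
      have h₂ := mul_nonneg (sub_nonneg.2 hxt) hy.le
      have h₃ := mul_nonneg (mul_nonneg (mul_nonneg hC (by linarith : 0 ≤ y - x))
        (sub_nonneg.2 hxt)) (sub_nonneg.2 hty.le)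
      linarith
    exact pos_of_mul_pos_right hpos (by linarith)
  · exact hy

/-- The threshold `4 (N + 1) / (N (3 N + 4))` for `b ^ 2` is exactly where the estimate
`2 N d ^ 2 ≤ μ (N b ^ 2 - 1)` stops sufficing. -/
lemma ineq_core_of_lt (N mu b d : ℝ) (hN : 0 < N) (hmu : 0 < mu) (hd : 0 ≤ d)
    (hdmu : N * d ≤ mu * b) (hbd : 2 * b * d ≤ N * b ^ 2 - 1)
    (hsmall : b ^ 2 * (N * (3 * N + 4)) < 4 * (N + 1)) :
    (N + 1) * mu + (N + 1) * (2 * N + 8) * d ^ 2 < N * (N + 2) * mu * b ^ 2 := by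
  have hd2 : 2 * N * d ^ 2 ≤ mu * (N * b ^ 2 - 1) := by
    nlinarith [mul_le_mul_of_nonneg_left hdmu (mul_nonneg zero_le_two hd),
      mul_le_mul_of_nonneg_left hbd hmu.le]
  refine lt_of_mul_lt_mul_left ?_ (by positivity : (0:ℝ) ≤ N)
  nlinarith [mul_lt_mul_of_pos_left hsmall hmu,
    mul_le_mul_of_nonneg_left hd2 (by positivity : (0:ℝ) ≤ (N + 1) * (N + 4))]

lemma ineq_core_of_le (N mu b d : ℝ) (hN : 15 ≤ N) (hmu : 0 < mu) (hb : 0 ≤ b) (hd : 0 ≤ d)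
    (hdmu : N * d ≤ mu * b) (hmub : mu ≤ 4 * (N + 6) * b ^ 2) (hb1 : b ^ 2 ≤ 1)
    (hlarge : 4 * (N + 1) ≤ b ^ 2 * (N * (3 * N + 4))) :
    (N + 1) * mu + (N + 1) * (2 * N + 8) * d ^ 2 < N * (N + 2) * mu * b ^ 2 := by
  have hd2 : N ^ 2 * d ^ 2 ≤ 4 * (N + 6) * mu * b ^ 4 := by
    nlinarith [mul_le_mul hdmu hdmu (mul_nonneg (by linarith) hd) (mul_nonneg hmu.le hb)]
  have hM : 0 < N * (3 * N + 4) := by positivity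
  have hpoly : 0 < N ^ 3 * (N + 2) * b ^ 2 - N ^ 2 * (N + 1)
      - 8 * (N + 1) * (N + 4) * (N + 6) * (b ^ 2) ^ 2 := by
    refine quadratic_pos_of_endpoints (x := 4 * (N + 1) / (N * (3 * N + 4))) (y := 1)
      (by positivity) ((div_le_iff₀ hM).2 hlarge) hb1 ?_ ?_
    · have hval : N ^ 3 * (N + 2) * (4 * (N + 1) / (N * (3 * N + 4))) - N ^ 2 * (N + 1) -
          8 * (N + 1) * (N + 4) * (N + 6) * (4 * (N + 1) / (N * (3 * N + 4))) ^ 2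
          = (N + 1) * (N + 4) * (N ^ 4 * (3 * N + 4) - 128 * (N + 1) ^ 2 * (N + 6))
            / (N * (3 * N + 4)) ^ 2 := by
        field_simp
        ring
      have : 0 < N ^ 4 * (3 * N + 4) - 128 * (N + 1) ^ 2 * (N + 6) := by
        nlinarith [pow_pos (by linarith : (0:ℝ) < N) 3,
          mul_nonneg (by linarith : (0:ℝ) ≤ N - 15) (pow_pos (by linarith : (0:ℝ) < N) 3).le]
      rw [hval]
      positivity
    · nlinarith [pow_pos (by linarith : (0:ℝ) < N) 3]
  refine lt_of_mul_lt_mul_left ?_ (by positivity : (0:ℝ) ≤ N ^ 2)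
  nlinarith [mul_pos hpoly hmu,
    mul_le_mul_of_nonneg_left hd2 (by positivity : (0:ℝ) ≤ (N + 1) * (2 * N + 8))]

lemma sum_sq_add_lt_of_estimates (N S T mu b c : ℝ) (hN : 15 ≤ N) (hmu : mu = (N - 2) * S + 2 * T)
    (hrow : N * (b - c) ≤ mu * b) (hc : 0 ≤ c) (hcb : c ≤ b)
    (hTlo : 2 * S - 2 * (b - c) ^ 2 ≤ T) (hThi : T ≤ 4 * S)
    (hShi : S ≤ 4 * b ^ 2) (hSlo : 4 * b ^ 2 ≤ (N - 1) * S)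
    (hone : 1 ≤ 2 * b ^ 2 + (N - 2) * c ^ 2) (hb1 : b ^ 2 ≤ 1) :
    S + 2 * (c - b) ^ 2 < N / (N + 1) * mu * b ^ 2 := by
  have hcb2 : c ^ 2 ≤ b ^ 2 := pow_le_pow_left₀ hc hcb 2
  have hNb : 1 ≤ N * b ^ 2 := by nlinarith
  have hb : 0 < b := lt_of_le_of_ne (hc.trans hcb) (by rintro rfl; norm_num at hNb)
  have hS : 0 < S := by nlinarith
  have hmu0 : 0 < mu := by nlinarith
  have hmub : mu ≤ 4 * (N + 6) * b ^ 2 := by nlinarith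
  have hbd : 2 * b * (b - c) ≤ N * b ^ 2 - 1 := by
    nlinarith [mul_le_mul_of_nonneg_left hcb2 (by linarith : (0:ℝ) ≤ N - 4),
      mul_le_mul_of_nonneg_left hcb hc]
  have key : (N + 1) * mu + (N + 1) * (2 * N + 8) * (b - c) ^ 2 < N * (N + 2) * mu * b ^ 2 := by
    rcases lt_or_ge (b ^ 2 * (N * (3 * N + 4))) (4 * (N + 1)) with hsmall | hlarge
    · exact ineq_core_of_lt N mu b (b - c) (by linarith) hmu0 (by linarith) hrow hbd hsmall
    · exact ineq_core_of_le N mu b (b - c) hN hmu0 hb.le (by linarith) hrow hmub hb1 hlarge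
  rw [div_mul_eq_mul_div, div_mul_eq_mul_div, lt_div_iff₀ (by linarith)]
  nlinarith

theorem stmt18 (n : ℕ) (hn : 15 ≤ n) (mu : ℝ)
    (v : Fin n → ℝ) (hunit : ∑ i, (v i) ^ 2 = 1)
    (hev : Lap (Qmat n) *ᵥ v = mu • v)
    (hmono : ∀ (i : Fin n) (h : i.val + 1 < n), v i ≤ v ⟨i.val + 1, h⟩)
    (hskew : ∀ i : Fin n, v i = - v ⟨n - 1 - i.val, by have := i.isLt; omega⟩) :
    (∑ i : Fin (n - 1),
        (v ⟨i.val, by have := i.isLt; omega⟩ - v ⟨i.val + 1, by have := i.isLt; omega⟩) ^ 2) +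
        2 * (v ⟨n - 2, by omega⟩ - v ⟨n - 1, by omega⟩) ^ 2 <
      ((n : ℝ) / ((n : ℝ) + 1)) * mu * (v ⟨n - 1, by omega⟩) ^ 2 := by
  obtain ⟨w, hw, hwv⟩ := exists_monotone_extension (by omega) v hmono
  have hwskew : ∀ a < n, w a = -w (n - 1 - a) := fun a ha => by
    simpa only [hwv] using hskew ⟨a, ha⟩
  have hwunit : ∑ a ∈ Finset.range n, w a ^ 2 = 1 := by
    simpa only [hwv, Fin.sum_univ_eq_sum_range (fun a => w a ^ 2)] using hunit
  have hquad := dotProduct_Lap_Qmat_mulVec v w hwv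
  rw [hev, dotProduct_smul, smul_eq_mul] at hquad
  simp only [dotProduct, ← sq, hunit, mul_one] at hquad
  have hrow := congrFun hev ⟨n - 1, by omega⟩
  rw [Lap_Qmat_mulVec_last (by omega) v w hwv, Pi.smul_apply, hwv, smul_eq_mul] at hrow
  simp only [hwv]
  rw [Fin.sum_univ_eq_sum_range (fun k => (w k - w (k + 1)) ^ 2)]
  have hN : (15 : ℝ) ≤ n := by exact_mod_cast hn
  refine sum_sq_add_lt_of_estimates n _ _ mu (w (n - 1)) (w (n - 2)) hN hquad ?_
    (abs_nonneg _ |>.trans (hw.abs_le_of_skew hwskew (by omega) le_rfl)) (hw (by omega))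
    (hw.le_sum_sq_sub_two_of_skew hwskew (by omega)) ?_
    (hw.sum_sq_sub_succ_le_of_skew hwskew (by omega))
    (four_mul_sq_le_mul_sum_sq_of_skew (by omega) hwskew)
    (hw.one_le_of_sum_sq hwskew (by omega) hwunit)
    (hwunit ▸ Finset.single_le_sum (fun a _ => sq_nonneg (w a)) (Finset.mem_range.2 (by omega)))
  · linarith [hw (show n - 3 ≤ n - 2 by omega)]
  · simpa only [show n - 2 + 1 = n - 1 by omega] using sum_sq_sub_two_le w (n - 2)
end
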